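/- Let A be an n×n real matrix and let A* be the 2n×2n skew-symmetric block matrix [[0, A], [−Aᵀ, 0]]. Then for any two distinct indices i, j ∈ {1,…,n}, Pf(A*_{\{n+i, j\}}) = (−1)^{(n−1)(n−2)/2} · det(A_{ji}), where A*_{\{n+i,j\}} is the submatrix of A* obtained by deleting rows and columns n+i and j, and A_{ji} is the (n−1)×(n−1) matrix obtained from A by deleting row j and column i. -/

import Mathlib

open Matrix

/-- The Pfaffian of an `N × N` real matrix (for `N` even), which for
skew-symmetric matrices agrees with the sum over partitions of `{1,…,N}` into
`N/2` unordered pairs; by convention the Pfaffian is `0` when `N` is odd. -/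
noncomputable def pf {N : ℕ} (M : Matrix (Fin N) (Fin N) ℝ) : ℝ :=
  if h : N % 2 = 0 then
    ((2 ^ (N / 2) * (N / 2).factorial : ℕ) : ℝ)⁻¹ *
      ∑ σ : Equiv.Perm (Fin N), ((Equiv.Perm.sign σ : ℤ) : ℝ) *
        ∏ i : Fin (N / 2),
          M (σ ⟨2 * i.val, by have := i.isLt; omega⟩)
            (σ ⟨2 * i.val + 1, by have := i.isLt; omega⟩)
  else 0

/-- The submatrix of `M` obtained by deleting the rows and columns indexed
by the subset `I` (keeping the remaining indices in increasing order). -/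
noncomputable def delete {N : ℕ} (M : Matrix (Fin N) (Fin N) ℝ) (I : Finset (Fin N)) :
    Matrix (Fin (N - I.card)) (Fin (N - I.card)) ℝ :=
  M.submatrix (Iᶜ.orderEmbOfFin (by rw [Finset.card_compl, Fintype.card_fin]))
              (Iᶜ.orderEmbOfFin (by rw [Finset.card_compl, Fintype.card_fin]))

/-- The `(n−1) × (n−1)` minor matrix of an `n × n` matrix obtained by deleting
row `i` and column `j` (keeping the remaining indices in increasing order). -/
noncomputable def minorRC {n : ℕ} (A : Matrix (Fin n) (Fin n) ℝ) (i j : Fin n) :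
    Matrix (Fin (n - 1)) (Fin (n - 1)) ℝ :=
  A.submatrix
    (({i}ᶜ : Finset (Fin n)).orderEmbOfFin
      (by rw [Finset.card_compl, Fintype.card_fin, Finset.card_singleton]))
    (({j}ᶜ : Finset (Fin n)).orderEmbOfFin
      (by rw [Finset.card_compl, Fintype.card_fin, Finset.card_singleton]))

section PfAuxSection

open Equiv Equiv.Perm Finset

namespace PfAux


def q (m : ℕ) : Fin m × Bool ≃ Fin (m + m) where
  toFun p := ⟨2 * p.1.val + (if p.2 then 0 else 1), by
    rcases p with ⟨⟨i, hi⟩, c⟩; cases c <;> simp <;> omega⟩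
  invFun k := (⟨k.val / 2, by have := k.isLt; omega⟩, decide (k.val % 2 = 0))
  left_inv := by
    rintro ⟨⟨i, hi⟩, c⟩
    have h1 : (2 * i + 1) % 2 = 1 := by omega
    have h2 : (2 * i + 0) % 2 = 0 := by omega
    cases c <;> simp only [Prod.mk.injEq, if_true, if_false, h1, h2, decide_eq_true_eq] <;>
      refine ⟨Fin.ext ?_, ?_⟩ <;> simp [h1, h2] <;> omega
  right_inv := by
    intro k
    apply Fin.ext
    by_cases h : k.val % 2 = 0 <;> simp [h] <;> omega

def a (m : ℕ) (i : Fin m) : Fin (m + m) := ⟨2 * i.val, by have := i.isLt; omega⟩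
def b (m : ℕ) (i : Fin m) : Fin (m + m) := ⟨2 * i.val + 1, by have := i.isLt; omega⟩

lemma q_true (m : ℕ) (i : Fin m) : q m (i, true) = a m i := by
  apply Fin.ext; simp [q, a]

lemma q_false (m : ℕ) (i : Fin m) : q m (i, false) = b m i := by
  apply Fin.ext; simp [q, b]


def sh (m : ℕ) : Equiv.Perm (Fin (m + m)) where
  toFun k := if k.val % 2 = 0 then ⟨k.val / 2, by have := k.isLt; omega⟩
    else ⟨m + k.val / 2, by have := k.isLt; omega⟩
  invFun k := if h : k.val < m then ⟨2 * k.val, by omega⟩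
    else ⟨2 * (k.val - m) + 1, by have := k.isLt; omega⟩
  left_inv := by
    intro k
    apply Fin.ext
    by_cases h : k.val % 2 = 0 <;> simp [h]
    all_goals first
      | omega
      | (split <;> simp <;> omega)
  right_inv := by
    intro k
    apply Fin.ext
    by_cases h : k.val < m <;> simp [h]
    all_goals first
      | omega
      | (split <;> simp <;> omega)

lemma sh_val (m : ℕ) (k : Fin (m + m)) :
    (sh m k).val = if k.val % 2 = 0 then k.val / 2 else m + k.val / 2 := by
  by_cases h : k.val % 2 = 0 <;> simp [sh, h]

lemma two_eq (m : ℕ) : (m + m) + 2 = (m+1) + (m+1) := by omega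

lemma mod_helper (a N : ℕ) (hN : 0 < N) (h : a < 2*N) : a % N = if a < N then a else a - N := by
  split
  · exact Nat.mod_eq_of_lt ‹_›
  · rw [Nat.mod_eq_sub_mod (by omega)]
    exact Nat.mod_eq_of_lt (by omega)

def emb (m : ℕ) (σ : Equiv.Perm (Fin (m + m))) : Equiv.Perm (Fin ((m+1) + (m+1))) :=
  Equiv.permCongr (finCongr (two_eq m))
    (Equiv.permCongr finSumFinEquiv (Equiv.sumCongr σ (1 : Equiv.Perm (Fin 2))))

lemma sign_emb (m : ℕ) (σ : Equiv.Perm (Fin (m + m))) :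
    Equiv.Perm.sign (emb m σ) = Equiv.Perm.sign σ := by
  simp [emb, Equiv.Perm.sign_permCongr, Equiv.Perm.sign_sumCongr]

lemma emb_val (m : ℕ) (σ : Equiv.Perm (Fin (m + m))) (x : Fin ((m+1) + (m+1))) :
    (emb m σ x).val = if h : x.val < m + m then (σ ⟨x.val, h⟩).val else x.val := by
  simp only [emb]
  rw [Equiv.permCongr_apply, Equiv.permCongr_apply]
  by_cases h : x.val < m + m
  · rw [dif_pos h]
    have h1 : (finCongr (two_eq m)).symm x = Fin.castAdd 2 ⟨x.val, h⟩ := by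
      apply Fin.ext; simp
    rw [h1, finSumFinEquiv_symm_apply_castAdd, Equiv.sumCongr_apply, Sum.map_inl,
      finSumFinEquiv_apply_left]
    simp
  · rw [dif_neg h]
    have h1 : (finCongr (two_eq m)).symm x
        = Fin.natAdd (m + m) ⟨x.val - (m + m), by have := x.isLt; omega⟩ := by
      apply Fin.ext; simp; omega
    rw [h1, finSumFinEquiv_symm_apply_natAdd, Equiv.sumCongr_apply, Sum.map_inr,
      finSumFinEquiv_apply_right]
    simp
    have := x.isLt; omega

def mid (m : ℕ) : Fin ((m+1) + (m+1)) := ⟨m, by omega⟩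

instance (m : ℕ) : NeZero ((m+1) + (m+1)) := ⟨by omega⟩

def cyc (m : ℕ) : Equiv.Perm (Fin ((m+1) + (m+1))) :=
  (Equiv.addLeft (mid m)) * (Fin.cycleRange (mid m)) * (Equiv.addLeft (mid m))⁻¹

lemma sign_cyc (m : ℕ) : Equiv.Perm.sign (cyc m) = (-1) ^ m := by
  have h : Equiv.Perm.sign (Fin.cycleRange (mid m)) = (-1) ^ m := by
    rw [Fin.sign_cycleRange]; rfl
  rw [cyc, _root_.map_mul, _root_.map_mul, _root_.map_inv, h, mul_comm, inv_mul_cancel_left]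

lemma cyc_val (m : ℕ) (y : Fin ((m+1) + (m+1))) :
    (cyc m y).val = if y.val < m then y.val
      else if y.val < 2*m then y.val + 1
      else if y.val = 2*m then m else y.val := by
  have hy := y.isLt
  have hmid : (mid m).val = m := rfl
  have haddval : ∀ w : Fin ((m+1) + (m+1)),
      ((Equiv.addLeft (mid m)) w).val
        = if m + w.val < (m+1) + (m+1) then m + w.val else m + w.val - ((m+1) + (m+1)) := by
    intro w
    have h1 : ((Equiv.addLeft (mid m)) w).val = ((mid m) + w).val := rfl
    rw [h1, Fin.val_add, hmid]
    exact mod_helper _ _ (by omega) (by have := w.isLt; omega)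
  obtain ⟨z, hz⟩ : ∃ z : Fin ((m+1)+(m+1)), (Equiv.addLeft (mid m)) z = y :=
    ⟨_, Equiv.apply_symm_apply _ _⟩
  have hzlt := z.isLt
  have hz' : (Equiv.addLeft (mid m))⁻¹ y = z := by
    rw [← hz]; exact Equiv.symm_apply_apply _ _
  have hkey : (if m + z.val < (m+1) + (m+1) then m + z.val
      else m + z.val - ((m+1) + (m+1))) = y.val := by
    rw [← haddval z, hz]
  have hkey' : m + z.val = y.val ∨ m + z.val = y.val + ((m+1)+(m+1)) := by
    by_cases hc : m + z.val < (m+1)+(m+1)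
    · rw [if_pos hc] at hkey; omega
    · rw [if_neg hc] at hkey; omega
  clear hkey
  have hcy : cyc m y = (Equiv.addLeft (mid m)) (Fin.cycleRange (mid m) z) := by
    rw [cyc, Equiv.Perm.mul_apply, Equiv.Perm.mul_apply, hz']
  rw [hcy]
  by_cases h1 : y.val < m
  · have hzv : z.val = y.val + (m + 2) := by omega
    have hgt : Fin.cycleRange (mid m) z = z := Fin.cycleRange_of_gt (by
      rw [Fin.lt_iff_val_lt_val, hzv, hmid]; omega)
    rw [hgt, haddval]
    (repeat' split) <;> omega
  · by_cases h2 : y.val < 2*m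
    · have hzv : z.val = y.val - m := by omega
      have hlt : Fin.cycleRange (mid m) z = z + 1 := Fin.cycleRange_of_lt (by
        rw [Fin.lt_iff_val_lt_val, hzv, hmid]; omega)
      have h1v : (1 : Fin ((m+1) + (m+1))).val = 1 := by
        rw [Fin.val_one']
        exact Nat.mod_eq_of_lt (by omega)
      have hz1 : (z + 1).val = z.val + 1 := by
        rw [Fin.val_add, h1v]
        exact Nat.mod_eq_of_lt (by omega)
      rw [hlt, haddval, hz1]
      (repeat' split) <;> omega
    · by_cases h3 : y.val = 2*m
      · have hzv : z.val = m := by omega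
        have heq : Fin.cycleRange (mid m) z = 0 := Fin.cycleRange_of_eq (by
          apply Fin.ext; rw [hzv, hmid])
        have h0v : ((0 : Fin ((m+1) + (m+1)))).val = 0 := rfl
        rw [heq, haddval, h0v]
        (repeat' split) <;> omega
      · have hzv : z.val = m + 1 := by omega
        have hgt : Fin.cycleRange (mid m) z = z := Fin.cycleRange_of_gt (by
          rw [Fin.lt_iff_val_lt_val, hzv, hmid]; omega)
        rw [hgt, haddval]
        (repeat' split) <;> omega

lemma sh_succ (m : ℕ) : sh (m+1) = cyc m * emb m (sh m) := by
  apply Equiv.ext; intro x; apply Fin.ext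
  rw [Equiv.Perm.mul_apply]
  have hx := x.isLt
  by_cases h : x.val < m + m
  · have e1 : (emb m (sh m) x).val
        = if x.val % 2 = 0 then x.val / 2 else m + x.val / 2 := by
      rw [emb_val, dif_pos h, sh_val]
    rw [cyc_val, sh_val, e1]
    by_cases hp : x.val % 2 = 0 <;> simp only [hp, if_true, if_false, reduceIte] <;>
      (repeat' split) <;> omega
  · have e1 : (emb m (sh m) x).val = x.val := by rw [emb_val, dif_neg h]
    rw [cyc_val, sh_val, e1]
    by_cases h3 : x.val = m + m
    · have hp : x.val % 2 = 0 := by omega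
      simp only [hp, if_true, reduceIte]
      (repeat' split) <;> omega
    · have h4 : x.val = m + m + 1 := by omega
      have hp : ¬ x.val % 2 = 0 := by omega
      simp only [hp, if_false, reduceIte]
      (repeat' split) <;> omega

lemma sign_sh (m : ℕ) : Equiv.Perm.sign (sh m) = (-1) ^ (m * (m-1) / 2) := by
  induction m with
  | zero =>
    have h : sh 0 = 1 := by
      apply Equiv.ext; intro x
      exact absurd x.isLt (by omega)
    simp [h]
  | succ m ih =>
    have hexp : (m+1) * ((m+1) - 1) / 2 = m * (m-1) / 2 + m :=
      calc (m+1) * ((m+1) - 1) / 2 = (m+1).choose 2 := (Nat.choose_two_right _).symm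
      _ = m.choose 1 + m.choose 2 := Nat.choose_succ_succ _ _
      _ = m * (m-1) / 2 + m := by
          rw [Nat.choose_one_right, Nat.choose_two_right]; exact Nat.add_comm _ _
    rw [sh_succ, _root_.map_mul, sign_cyc, sign_emb, ih, hexp, pow_add]
    exact mul_comm _ _


lemma sh_a (m : ℕ) (i : Fin m) : sh m (a m i) = Fin.castAdd m i := by
  apply Fin.ext
  rw [sh_val]
  simp [a]

lemma sh_b (m : ℕ) (i : Fin m) : sh m (b m i) = Fin.natAdd m i := by
  apply Fin.ext
  rw [sh_val]
  simp [b]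
  omega





lemma pf_eq_sum (m : ℕ) (M : Matrix (Fin (m + m)) (Fin (m + m)) ℝ) :
    pf M = (((2 : ℕ) ^ m * m.factorial : ℕ) : ℝ)⁻¹ *
      ∑ σ : Equiv.Perm (Fin (m + m)), ((Equiv.Perm.sign σ : ℤ) : ℝ) *
        ∏ i : Fin m, M (σ (a m i)) (σ (b m i)) := by
  unfold pf
  rw [dif_pos (by omega : (m + m) % 2 = 0)]
  have hhalf : (m + m) / 2 = m := by omega
  congr 1
  · rw [hhalf]
  · apply Finset.sum_congr rfl
    intro σ _
    congr 1
    refine Fintype.prod_equiv (finCongr hhalf) _ _ (fun i => ?_)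
    have ha : (⟨2 * i.val, by have := i.isLt; omega⟩ : Fin (m + m))
        = a m (finCongr hhalf i) := Fin.ext (by simp [a])
    have hb : (⟨2 * i.val + 1, by have := i.isLt; omega⟩ : Fin (m + m))
        = b m (finCongr hhalf i) := Fin.ext (by simp [b])
    rw [ha, hb]

section Block

variable {m : ℕ}

def MB (B : Matrix (Fin m) (Fin m) ℝ) : Matrix (Fin (m + m)) (Fin (m + m)) ℝ :=
  (Matrix.fromBlocks 0 B (-Bᵀ) 0).submatrix finSumFinEquiv.symm finSumFinEquiv.symm

variable (B : Matrix (Fin m) (Fin m) ℝ)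

lemma MB_cn (p t : Fin m) : MB B (Fin.castAdd m p) (Fin.natAdd m t) = B p t := by
  simp only [MB, Matrix.submatrix_apply]
  rw [finSumFinEquiv_symm_apply_castAdd, finSumFinEquiv_symm_apply_natAdd,
    Matrix.fromBlocks_apply₁₂]

lemma MB_nc (p t : Fin m) : MB B (Fin.natAdd m t) (Fin.castAdd m p) = -(B p t) := by
  simp only [MB, Matrix.submatrix_apply]
  rw [finSumFinEquiv_symm_apply_castAdd, finSumFinEquiv_symm_apply_natAdd,
    Matrix.fromBlocks_apply₂₁]
  simp

lemma MB_cc (p t : Fin m) : MB B (Fin.castAdd m p) (Fin.castAdd m t) = 0 := by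
  simp only [MB, Matrix.submatrix_apply]
  rw [finSumFinEquiv_symm_apply_castAdd, finSumFinEquiv_symm_apply_castAdd,
    Matrix.fromBlocks_apply₁₁]
  simp

lemma MB_nn (p t : Fin m) : MB B (Fin.natAdd m p) (Fin.natAdd m t) = 0 := by
  simp only [MB, Matrix.submatrix_apply]
  rw [finSumFinEquiv_symm_apply_natAdd, finSumFinEquiv_symm_apply_natAdd,
    Matrix.fromBlocks_apply₂₂]
  simp

lemma fin_split (x : Fin (m + m)) :
    (∃ p : Fin m, x = Fin.castAdd m p ∧ x.val < m)
      ∨ (∃ p : Fin m, x = Fin.natAdd m p ∧ m ≤ x.val) := by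
  by_cases h : x.val < m
  · exact Or.inl ⟨⟨x.val, h⟩, Fin.ext rfl, h⟩
  · refine Or.inr ⟨⟨x.val - m, by have := x.isLt; omega⟩, Fin.ext ?_, by omega⟩
    show x.val = m + (x.val - m)
    omega

lemma MB_zero (x y : Fin (m + m)) (h : x.val < m ↔ y.val < m) : MB B x y = 0 := by
  rcases fin_split x with ⟨p, rfl, hp⟩ | ⟨p, rfl, hp⟩ <;>
    rcases fin_split y with ⟨t, rfl, ht⟩ | ⟨t, rfl, ht⟩
  · exact MB_cc B p t
  · exact absurd (h.mp hp) (by omega)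
  · exact absurd (h.mpr ht) (by omega)
  · exact MB_nn B p t

end Block

def Eps (m : ℕ) (ε : Fin m → Bool) : Equiv.Perm (Fin (m + m)) :=
  Equiv.permCongr (q m)
    (Equiv.prodCongrRight (fun i => if ε i then 1 else Equiv.swap true false))

lemma sign_Eps (m : ℕ) (ε : Fin m → Bool) :
    Equiv.Perm.sign (Eps m ε) = ∏ i : Fin m, (if ε i then 1 else -1) := by
  rw [Eps, Equiv.Perm.sign_permCongr, Equiv.Perm.sign_prodCongrRight]
  refine Finset.prod_congr rfl (fun i _ => ?_)
  by_cases h : ε i <;> simp [h, Equiv.Perm.sign_swap]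

lemma Eps_a (m : ℕ) (ε : Fin m → Bool) (i : Fin m) :
    Eps m ε (a m i) = if ε i then a m i else b m i := by
  rw [Eps, Equiv.permCongr_apply, ← q_true, Equiv.symm_apply_apply]
  by_cases h : ε i <;>
    simp [h, Equiv.prodCongrRight_apply, q_true, q_false, Equiv.swap_apply_left]

lemma Eps_b (m : ℕ) (ε : Fin m → Bool) (i : Fin m) :
    Eps m ε (b m i) = if ε i then b m i else a m i := by
  rw [Eps, Equiv.permCongr_apply, ← q_false, Equiv.symm_apply_apply]
  by_cases h : ε i <;>
    simp [h, Equiv.prodCongrRight_apply, q_true, q_false, Equiv.swap_apply_right]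

def Pp (m : ℕ) (π τ : Equiv.Perm (Fin m)) : Equiv.Perm (Fin (m + m)) :=
  Equiv.permCongr finSumFinEquiv (Equiv.sumCongr π τ)

lemma sign_Pp (m : ℕ) (π τ : Equiv.Perm (Fin m)) :
    Equiv.Perm.sign (Pp m π τ) = Equiv.Perm.sign π * Equiv.Perm.sign τ := by
  simp [Pp, Equiv.Perm.sign_permCongr, Equiv.Perm.sign_sumCongr]

lemma Pp_c (m : ℕ) (π τ : Equiv.Perm (Fin m)) (p : Fin m) :
    Pp m π τ (Fin.castAdd m p) = Fin.castAdd m (π p) := by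
  simp only [Pp, Equiv.permCongr_apply, Equiv.sumCongr_apply]
  rw [finSumFinEquiv_symm_apply_castAdd, Sum.map_inl, finSumFinEquiv_apply_left]

lemma Pp_n (m : ℕ) (π τ : Equiv.Perm (Fin m)) (p : Fin m) :
    Pp m π τ (Fin.natAdd m p) = Fin.natAdd m (τ p) := by
  simp only [Pp, Equiv.permCongr_apply, Equiv.sumCongr_apply]
  rw [finSumFinEquiv_symm_apply_natAdd, Sum.map_inr, finSumFinEquiv_apply_right]

def Phi (m : ℕ) (t : (Equiv.Perm (Fin m) × Equiv.Perm (Fin m)) × (Fin m → Bool)) :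
    Equiv.Perm (Fin (m + m)) :=
  Pp m t.1.1 t.1.2 * sh m * Eps m t.2

lemma Phi_a (m : ℕ) (t : (Equiv.Perm (Fin m) × Equiv.Perm (Fin m)) × (Fin m → Bool)) (i : Fin m) :
    Phi m t (a m i)
      = if t.2 i then Fin.castAdd m (t.1.1 i) else Fin.natAdd m (t.1.2 i) := by
  rw [Phi, Equiv.Perm.mul_apply, Equiv.Perm.mul_apply, Eps_a]
  by_cases h : t.2 i
  · rw [if_pos h, if_pos h, sh_a, Pp_c]
  · rw [if_neg h, if_neg h, sh_b, Pp_n]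

lemma Phi_b (m : ℕ) (t : (Equiv.Perm (Fin m) × Equiv.Perm (Fin m)) × (Fin m → Bool)) (i : Fin m) :
    Phi m t (b m i)
      = if t.2 i then Fin.natAdd m (t.1.2 i) else Fin.castAdd m (t.1.1 i) := by
  rw [Phi, Equiv.Perm.mul_apply, Equiv.Perm.mul_apply, Eps_b]
  by_cases h : t.2 i
  · rw [if_pos h, if_pos h, sh_b, Pp_n]
  · rw [if_neg h, if_neg h, sh_a, Pp_c]

lemma sign_Phi (m : ℕ) (t : (Equiv.Perm (Fin m) × Equiv.Perm (Fin m)) × (Fin m → Bool)) :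
    Equiv.Perm.sign (Phi m t)
      = Equiv.Perm.sign t.1.1 * Equiv.Perm.sign t.1.2 * Equiv.Perm.sign (sh m)
        * ∏ i : Fin m, (if t.2 i then 1 else -1) := by
  rw [Phi, _root_.map_mul, _root_.map_mul, sign_Pp, sign_Eps]

lemma Phi_inj (m : ℕ) : Function.Injective (Phi m) := by
  rintro ⟨⟨π, τ⟩, ε⟩ ⟨⟨π', τ'⟩, ε'⟩ h
  have key : ∀ i : Fin m, ε i = ε' i ∧ π i = π' i ∧ τ i = τ' i := by
    intro i
    have ha : Phi m ((π, τ), ε) (a m i) = Phi m ((π', τ'), ε') (a m i) := by rw [h]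
    have hb : Phi m ((π, τ), ε) (b m i) = Phi m ((π', τ'), ε') (b m i) := by rw [h]
    rw [Phi_a, Phi_a] at ha
    rw [Phi_b, Phi_b] at hb
    simp only at ha hb
    by_cases h1 : ε i = true <;> by_cases h2 : ε' i = true
    · rw [if_pos h1, if_pos h2] at ha hb
      refine ⟨by rw [h1, h2], Fin.ext ?_, Fin.ext ?_⟩
      · simpa [Fin.castAdd] using congrArg Fin.val ha
      · have := congrArg Fin.val hb
        simp [Fin.natAdd] at this
        omega
    · rw [if_pos h1, if_neg h2] at ha
      have hv := congrArg Fin.val ha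
      simp [Fin.castAdd, Fin.natAdd] at hv
      have := (π i).isLt
      omega
    · rw [if_neg h1, if_pos h2] at ha
      have hv := congrArg Fin.val ha
      simp [Fin.castAdd, Fin.natAdd] at hv
      have := (π' i).isLt
      omega
    · rw [if_neg h1, if_neg h2] at ha hb
      refine ⟨by simp [Bool.not_eq_true] at h1 h2; rw [h1, h2], Fin.ext ?_, Fin.ext ?_⟩
      · simpa [Fin.castAdd] using congrArg Fin.val hb
      · have := congrArg Fin.val ha
        simp [Fin.natAdd] at this
        omega
  have hε : ε = ε' := funext fun i => (key i).1
  have hπ : π = π' := Equiv.ext fun i => (key i).2.1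
  have hτ : τ = τ' := Equiv.ext fun i => (key i).2.2
  subst hε; subst hπ; subst hτ; rfl

lemma mem_range_of_ne {m : ℕ} (B : Matrix (Fin m) (Fin m) ℝ) (σ : Equiv.Perm (Fin (m + m)))
    (hne : ∏ i : Fin m, MB B (σ (a m i)) (σ (b m i)) ≠ 0) :
    ∃ t, Phi m t = σ := by
  have hmix : ∀ i : Fin m, ((σ (a m i)).val < m ∧ m ≤ (σ (b m i)).val)
      ∨ (m ≤ (σ (a m i)).val ∧ (σ (b m i)).val < m) := by
    intro i
    have hfac : MB B (σ (a m i)) (σ (b m i)) ≠ 0 := fun h0 =>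
      hne (Finset.prod_eq_zero (Finset.mem_univ i) h0)
    by_cases hx : (σ (a m i)).val < m <;> by_cases hy : (σ (b m i)).val < m
    · exact absurd (MB_zero B _ _ (by tauto)) hfac
    · exact Or.inl ⟨hx, by omega⟩
    · exact Or.inr ⟨by omega, hy⟩
    · exact absurd (MB_zero B _ _ (by tauto)) hfac
  classical
  set ε : Fin m → Bool := fun i => decide ((σ (a m i)).val < m) with hε
  set pF : Fin m → Fin m := fun i =>
    if h : (σ (a m i)).val < m then ⟨(σ (a m i)).val, h⟩
    else if h2 : (σ (b m i)).val < m then ⟨(σ (b m i)).val, h2⟩ else i with hpF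
  set tF : Fin m → Fin m := fun i =>
    if h : m ≤ (σ (b m i)).val then ⟨(σ (b m i)).val - m, by have := (σ (b m i)).isLt; omega⟩
    else if h2 : m ≤ (σ (a m i)).val then ⟨(σ (a m i)).val - m,
      by have := (σ (a m i)).isLt; omega⟩ else i with htF
  have hab_inj : ∀ (i j : Fin m), (2 : ℕ) * i.val = 2 * j.val → i = j := fun i j h =>
    Fin.ext (by omega)
  have hpF_inj : Function.Injective pF := by
    intro i j hij
    rw [hpF] at hij
    simp only at hij
    rcases hmix i with ⟨hi1, hi2⟩ | ⟨hi1, hi2⟩ <;> rcases hmix j with ⟨hj1, hj2⟩ | ⟨hj1, hj2⟩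
    · rw [dif_pos hi1, dif_pos hj1] at hij
      simp only [Fin.mk.injEq] at hij
      have hv : (σ (a m i)).val = (σ (a m j)).val := hij
      have : a m i = a m j := σ.injective (Fin.ext hv)
      have := congrArg Fin.val this
      exact Fin.ext (by simpa [a] using this)
    · rw [dif_pos hi1, dif_neg (by omega), dif_pos hj2] at hij
      simp only [Fin.mk.injEq] at hij
      have hv : (σ (a m i)).val = (σ (b m j)).val := hij
      have : a m i = b m j := σ.injective (Fin.ext hv)
      have := congrArg Fin.val this
      simp [a, b] at this
      omega
    · rw [dif_neg (by omega), dif_pos hi2, dif_pos hj1] at hij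
      simp only [Fin.mk.injEq] at hij
      have hv : (σ (b m i)).val = (σ (a m j)).val := hij
      have : b m i = a m j := σ.injective (Fin.ext hv)
      have := congrArg Fin.val this
      simp [a, b] at this
      omega
    · rw [dif_neg (by omega), dif_pos hi2, dif_neg (by omega), dif_pos hj2] at hij
      simp only [Fin.mk.injEq] at hij
      have hv : (σ (b m i)).val = (σ (b m j)).val := hij
      have : b m i = b m j := σ.injective (Fin.ext hv)
      have := congrArg Fin.val this
      simp [b] at this
      exact Fin.ext (by omega)
  have htF_inj : Function.Injective tF := by
    intro i j hij
    rw [htF] at hij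
    simp only at hij
    rcases hmix i with ⟨hi1, hi2⟩ | ⟨hi1, hi2⟩ <;> rcases hmix j with ⟨hj1, hj2⟩ | ⟨hj1, hj2⟩
    · rw [dif_pos hi2, dif_pos hj2] at hij
      simp only [Fin.mk.injEq] at hij
      have hv : (σ (b m i)).val - m = (σ (b m j)).val - m := hij
      have hv2 : (σ (b m i)).val = (σ (b m j)).val := by omega
      have : b m i = b m j := σ.injective (Fin.ext hv2)
      have := congrArg Fin.val this
      simp [b] at this
      exact Fin.ext (by omega)
    · rw [dif_pos hi2, dif_neg (by omega), dif_pos hj1] at hij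
      simp only [Fin.mk.injEq] at hij
      have hv : (σ (b m i)).val - m = (σ (a m j)).val - m := hij
      have hv2 : (σ (b m i)).val = (σ (a m j)).val := by omega
      have : b m i = a m j := σ.injective (Fin.ext hv2)
      have := congrArg Fin.val this
      simp [a, b] at this
      omega
    · rw [dif_neg (by omega), dif_pos hi1, dif_pos hj2] at hij
      simp only [Fin.mk.injEq] at hij
      have hv : (σ (a m i)).val - m = (σ (b m j)).val - m := hij
      have hv2 : (σ (a m i)).val = (σ (b m j)).val := by omega
      have : a m i = b m j := σ.injective (Fin.ext hv2)
      have := congrArg Fin.val this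
      simp [a, b] at this
      omega
    · rw [dif_neg (by omega), dif_pos hi1, dif_neg (by omega), dif_pos hj1] at hij
      simp only [Fin.mk.injEq] at hij
      have hv : (σ (a m i)).val - m = (σ (a m j)).val - m := hij
      have hv2 : (σ (a m i)).val = (σ (a m j)).val := by omega
      have : a m i = a m j := σ.injective (Fin.ext hv2)
      have := congrArg Fin.val this
      simp [a] at this
      exact Fin.ext (by omega)
  set π : Equiv.Perm (Fin m) :=
    Equiv.ofBijective pF ((Fintype.bijective_iff_injective_and_card pF).mpr ⟨hpF_inj, rfl⟩)
    with hπ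
  set τ : Equiv.Perm (Fin m) :=
    Equiv.ofBijective tF ((Fintype.bijective_iff_injective_and_card tF).mpr ⟨htF_inj, rfl⟩)
    with hτ
  refine ⟨((π, τ), ε), ?_⟩
  apply Equiv.ext
  intro k
  obtain ⟨⟨i, c⟩, rfl⟩ : ∃ p, q m p = k := (q m).surjective k
  have hπa : π i = pF i := rfl
  have hτa : τ i = tF i := rfl
  cases c
  · rw [q_false, Phi_b]
    simp only
    rcases hmix i with ⟨hi1, hi2⟩ | ⟨hi1, hi2⟩
    · have hεi : ε i = true := by rw [hε]; simp [hi1]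
      rw [if_pos hεi, hτa, htF]
      simp only
      rw [dif_pos hi2]
      apply Fin.ext
      show m + ((σ (b m i)).val - m) = _
      omega
    · have hεi : ¬ ε i = true := by rw [hε]; simp; omega
      rw [if_neg hεi, hπa, hpF]
      simp only
      rw [dif_neg (by omega), dif_pos hi2]
      apply Fin.ext
      rfl
  · rw [q_true, Phi_a]
    simp only
    rcases hmix i with ⟨hi1, hi2⟩ | ⟨hi1, hi2⟩
    · have hεi : ε i = true := by rw [hε]; simp [hi1]
      rw [if_pos hεi, hπa, hpF]
      simp only
      rw [dif_pos hi1]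
      apply Fin.ext
      rfl
    · have hεi : ¬ ε i = true := by rw [hε]; simp; omega
      rw [if_neg hεi, hτa, htF]
      simp only
      rw [dif_neg (by omega), dif_pos hi1]
      apply Fin.ext
      show m + ((σ (a m i)).val - m) = _
      omega

lemma sum_tau (m : ℕ) (B : Matrix (Fin m) (Fin m) ℝ) (π : Equiv.Perm (Fin m)) :
    ∑ τ : Equiv.Perm (Fin m), ((Equiv.Perm.sign τ : ℤ) : ℝ) * ∏ i, B (π i) (τ i)
      = ((Equiv.Perm.sign π : ℤ) : ℝ) * B.det := by
  rw [← Fintype.sum_equiv (Equiv.mulRight π)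
    (fun ρ => ((Equiv.Perm.sign (ρ * π) : ℤ) : ℝ) * ∏ i, B (π i) ((ρ * π) i))
    (fun τ => ((Equiv.Perm.sign τ : ℤ) : ℝ) * ∏ i, B (π i) (τ i))
    (fun ρ => rfl)]
  have h3 : ∑ ρ : Equiv.Perm (Fin m), ((Equiv.Perm.sign ρ : ℤ) : ℝ) * ∏ j, B j (ρ j)
      = B.det := by
    rw [← Matrix.det_transpose B, Matrix.det_apply']
    simp only [Matrix.transpose_apply]
  calc ∑ ρ : Equiv.Perm (Fin m), ((Equiv.Perm.sign (ρ * π) : ℤ) : ℝ) * ∏ i, B (π i) ((ρ * π) i)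
      = ∑ ρ : Equiv.Perm (Fin m),
          ((Equiv.Perm.sign π : ℤ) : ℝ) * (((Equiv.Perm.sign ρ : ℤ) : ℝ) * ∏ j, B j (ρ j)) := by
        refine Finset.sum_congr rfl (fun ρ _ => ?_)
        have hs : ((Equiv.Perm.sign (ρ * π) : ℤ) : ℝ)
            = ((Equiv.Perm.sign ρ : ℤ) : ℝ) * ((Equiv.Perm.sign π : ℤ) : ℝ) := by
          rw [_root_.map_mul]
          push_cast [Units.val_mul]
          ring
        have hp : ∏ i, B (π i) ((ρ * π) i) = ∏ j, B j (ρ j) := by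
          have := Equiv.prod_comp π (fun j => B j (ρ j))
          simpa [Equiv.Perm.mul_apply] using this
        rw [hs, hp]
        ring
    _ = ((Equiv.Perm.sign π : ℤ) : ℝ) * B.det := by rw [← Finset.mul_sum, h3]

lemma term_eval (m : ℕ) (B : Matrix (Fin m) (Fin m) ℝ)
    (t : (Equiv.Perm (Fin m) × Equiv.Perm (Fin m)) × (Fin m → Bool)) :
    ((Equiv.Perm.sign (Phi m t) : ℤ) : ℝ)
        * ∏ i : Fin m, MB B (Phi m t (a m i)) (Phi m t (b m i))
      = ((Equiv.Perm.sign t.1.1 : ℤ) : ℝ) * ((Equiv.Perm.sign t.1.2 : ℤ) : ℝ)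
        * ((Equiv.Perm.sign (sh m) : ℤ) : ℝ) * ∏ i : Fin m, B (t.1.1 i) (t.1.2 i) := by
  obtain ⟨⟨π, τ⟩, ε⟩ := t
  have hent : ∀ i : Fin m, MB B (Phi m ((π, τ), ε) (a m i)) (Phi m ((π, τ), ε) (b m i))
      = (if ε i then (1 : ℝ) else -1) * B (π i) (τ i) := by
    intro i
    rw [Phi_a, Phi_b]
    simp only
    by_cases h : ε i = true
    · rw [if_pos h, if_pos h, if_pos h, MB_cn, one_mul]
    · rw [if_neg h, if_neg h, if_neg h, MB_nc]
      ring
  have hprod : ∏ i : Fin m, MB B (Phi m ((π, τ), ε) (a m i)) (Phi m ((π, τ), ε) (b m i))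
      = (∏ i : Fin m, (if ε i then (1 : ℝ) else -1)) * ∏ i : Fin m, B (π i) (τ i) := by
    rw [← Finset.prod_mul_distrib]
    exact Finset.prod_congr rfl (fun i _ => hent i)
  have hsgn : ((Equiv.Perm.sign (Phi m ((π, τ), ε)) : ℤ) : ℝ)
      = ((Equiv.Perm.sign π : ℤ) : ℝ) * ((Equiv.Perm.sign τ : ℤ) : ℝ)
        * ((Equiv.Perm.sign (sh m) : ℤ) : ℝ)
        * ∏ i : Fin m, (if ε i then (1 : ℝ) else -1) := by
    rw [sign_Phi]
    simp only
    have hu : (((∏ i : Fin m, (if ε i then (1 : ℤˣ) else -1)) : ℤˣ) : ℤ)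
        = ∏ i : Fin m, (((if ε i then (1 : ℤˣ) else -1) : ℤˣ) : ℤ) :=
      map_prod (Units.coeHom ℤ) _ _
    push_cast [Units.val_mul, hu]
    congr 1
    refine Finset.prod_congr rfl (fun i _ => ?_)
    by_cases h : ε i = true <;> simp [h]
  rw [hprod, hsgn]
  have hP1 : (∏ i : Fin m, (if ε i then (1 : ℝ) else -1))
      * (∏ i : Fin m, (if ε i then (1 : ℝ) else -1)) = 1 := by
    rw [← Finset.prod_mul_distrib]
    refine Finset.prod_eq_one (fun i _ => ?_)
    by_cases h : ε i = true <;> simp [h]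
  simp only
  calc ((Equiv.Perm.sign π : ℤ) : ℝ) * ((Equiv.Perm.sign τ : ℤ) : ℝ)
        * ((Equiv.Perm.sign (sh m) : ℤ) : ℝ) * (∏ i : Fin m, (if ε i then (1 : ℝ) else -1))
        * ((∏ i : Fin m, (if ε i then (1 : ℝ) else -1)) * ∏ i : Fin m, B (π i) (τ i))
      = ((Equiv.Perm.sign π : ℤ) : ℝ) * ((Equiv.Perm.sign τ : ℤ) : ℝ)
        * ((Equiv.Perm.sign (sh m) : ℤ) : ℝ)
        * (((∏ i : Fin m, (if ε i then (1 : ℝ) else -1))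
            * (∏ i : Fin m, (if ε i then (1 : ℝ) else -1))) * ∏ i : Fin m, B (π i) (τ i)) := by
        ring
    _ = _ := by rw [hP1]; ring

theorem pf_MB (m : ℕ) (B : Matrix (Fin m) (Fin m) ℝ) :
    pf (MB B) = ((Equiv.Perm.sign (sh m) : ℤ) : ℝ) * B.det := by
  classical
  rw [pf_eq_sum]
  set F : Equiv.Perm (Fin (m + m)) → ℝ := fun σ =>
    ((Equiv.Perm.sign σ : ℤ) : ℝ) * ∏ i : Fin m, MB B (σ (a m i)) (σ (b m i)) with hF
  have h_ext : ∑ σ ∈ Finset.univ.image (Phi m), F σ = ∑ σ : Equiv.Perm (Fin (m + m)), F σ := by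
    refine Finset.sum_subset (Finset.subset_univ _) (fun σ _ hσ => ?_)
    by_contra hFne
    have hne : ∏ i : Fin m, MB B (σ (a m i)) (σ (b m i)) ≠ 0 := by
      intro hp
      exact hFne (by rw [hF]; simp only; rw [hp, mul_zero])
    obtain ⟨t, ht⟩ := mem_range_of_ne B σ hne
    exact hσ (Finset.mem_image.mpr ⟨t, Finset.mem_univ _, ht⟩)
  have h_img : ∑ σ ∈ Finset.univ.image (Phi m), F σ
      = ∑ t : (Equiv.Perm (Fin m) × Equiv.Perm (Fin m)) × (Fin m → Bool), F (Phi m t) :=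
    Finset.sum_image (fun x _ y _ h => Phi_inj m h)
  rw [← h_ext, h_img]
  have h_terms : ∑ t : (Equiv.Perm (Fin m) × Equiv.Perm (Fin m)) × (Fin m → Bool), F (Phi m t)
      = ∑ p : Equiv.Perm (Fin m) × Equiv.Perm (Fin m), (2 : ℝ) ^ m *
          (((Equiv.Perm.sign p.1 : ℤ) : ℝ) * ((Equiv.Perm.sign p.2 : ℤ) : ℝ)
            * ((Equiv.Perm.sign (sh m) : ℤ) : ℝ) * ∏ i : Fin m, B (p.1 i) (p.2 i)) := by
    rw [Fintype.sum_prod_type]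
    refine Finset.sum_congr rfl (fun p _ => ?_)
    have : ∀ ε : Fin m → Bool, F (Phi m (p, ε))
        = ((Equiv.Perm.sign p.1 : ℤ) : ℝ) * ((Equiv.Perm.sign p.2 : ℤ) : ℝ)
          * ((Equiv.Perm.sign (sh m) : ℤ) : ℝ) * ∏ i : Fin m, B (p.1 i) (p.2 i) := by
      intro ε
      rw [hF]
      exact term_eval m B (p, ε)
    rw [Finset.sum_congr rfl (fun ε _ => this ε), Finset.sum_const]
    simp [Fintype.card_fun]
    try ring
  rw [h_terms]
  have h_final : ∑ p : Equiv.Perm (Fin m) × Equiv.Perm (Fin m), (2 : ℝ) ^ m *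
      (((Equiv.Perm.sign p.1 : ℤ) : ℝ) * ((Equiv.Perm.sign p.2 : ℤ) : ℝ)
        * ((Equiv.Perm.sign (sh m) : ℤ) : ℝ) * ∏ i : Fin m, B (p.1 i) (p.2 i))
      = (2 : ℝ) ^ m * (m.factorial : ℝ)
        * (((Equiv.Perm.sign (sh m) : ℤ) : ℝ) * B.det) := by
    rw [Fintype.sum_prod_type]
    have hinner : ∀ π : Equiv.Perm (Fin m),
        ∑ τ : Equiv.Perm (Fin m), (2 : ℝ) ^ m *
          (((Equiv.Perm.sign π : ℤ) : ℝ) * ((Equiv.Perm.sign τ : ℤ) : ℝ)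
            * ((Equiv.Perm.sign (sh m) : ℤ) : ℝ) * ∏ i : Fin m, B (π i) (τ i))
        = (2 : ℝ) ^ m * (((Equiv.Perm.sign (sh m) : ℤ) : ℝ) * B.det) := by
      intro π
      have : ∀ τ : Equiv.Perm (Fin m), (2 : ℝ) ^ m *
          (((Equiv.Perm.sign π : ℤ) : ℝ) * ((Equiv.Perm.sign τ : ℤ) : ℝ)
            * ((Equiv.Perm.sign (sh m) : ℤ) : ℝ) * ∏ i : Fin m, B (π i) (τ i))
          = ((2 : ℝ) ^ m * ((Equiv.Perm.sign π : ℤ) : ℝ)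
              * ((Equiv.Perm.sign (sh m) : ℤ) : ℝ))
            * (((Equiv.Perm.sign τ : ℤ) : ℝ) * ∏ i : Fin m, B (π i) (τ i)) := by
        intro τ; ring
      rw [Finset.sum_congr rfl (fun τ _ => this τ), ← Finset.mul_sum, sum_tau]
      have hself : ((Equiv.Perm.sign π : ℤ) : ℝ) * ((Equiv.Perm.sign π : ℤ) : ℝ) = 1 := by
        have := Int.units_mul_self (Equiv.Perm.sign π)
        have h2 : (((Equiv.Perm.sign π * Equiv.Perm.sign π : ℤˣ) : ℤ) : ℝ) = ((1 : ℤ) : ℝ) := by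
          rw [this]; norm_num
        push_cast [Units.val_mul] at h2
        linarith [h2]
      calc (2 : ℝ) ^ m * ((Equiv.Perm.sign π : ℤ) : ℝ) * ((Equiv.Perm.sign (sh m) : ℤ) : ℝ)
            * (((Equiv.Perm.sign π : ℤ) : ℝ) * B.det)
          = (((Equiv.Perm.sign π : ℤ) : ℝ) * ((Equiv.Perm.sign π : ℤ) : ℝ))
            * ((2 : ℝ) ^ m * (((Equiv.Perm.sign (sh m) : ℤ) : ℝ) * B.det)) := by ring
        _ = _ := by rw [hself]; ring
    rw [Finset.sum_congr rfl (fun π _ => hinner π), Finset.sum_const]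
    simp [Fintype.card_perm]
    try ring
  rw [h_final]
  have h2 : ((2 : ℕ) ^ m * m.factorial : ℕ) ≠ 0 := by
    positivity
  push_cast
  rw [← mul_assoc]
  rw [inv_mul_cancel₀ (by positivity : ((2 : ℝ) ^ m * (m.factorial : ℝ)) ≠ 0)]
  ring

lemma pf_cast {N N' : ℕ} (h : N = N') (M : Matrix (Fin N') (Fin N') ℝ) :
    pf (M.submatrix (Fin.cast h) (Fin.cast h)) = pf M := by
  subst h
  rfl

end PfAux

end PfAuxSection

open PfAux

/-- Lemma 4.1(iii): for an arbitrary `n × n` real matrix `A`, the `2n × 2n`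
skew-symmetric block matrix `A* = [[0, A], [−Aᵀ, 0]]` and distinct `i, j ∈ {1,…,n}`,
`Pf(A*_{{n+i, j}}) = (−1)^{(n−1)(n−2)/2} det(A_{ji})`. -/
theorem pf_block_delete_mixed' {n : ℕ} (A : Matrix (Fin n) (Fin n) ℝ)
    (i j : Fin n) (hij : i ≠ j) :
    pf (delete ((Matrix.fromBlocks 0 A (-Aᵀ) 0).submatrix
          (finSumFinEquiv (m := n) (n := n)).symm (finSumFinEquiv (m := n) (n := n)).symm)
        {Fin.natAdd n i, Fin.castAdd n j}) =
      (-1 : ℝ) ^ ((n - 1) * (n - 2) / 2) * (minorRC A j i).det := by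

  classical
  have hn : 0 < n := i.pos
  set I : Finset (Fin (n + n)) := {Fin.natAdd n i, Fin.castAdd n j} with hI
  have hne : Fin.natAdd n i ≠ Fin.castAdd n j := by
    intro h
    have hval := congrArg Fin.val h
    simp only [Fin.coe_natAdd, Fin.coe_castAdd] at hval
    have := j.isLt
    omega
  have hcard : I.card = 2 := by
    rw [hI, Finset.card_insert_of_notMem (by simpa using hne), Finset.card_singleton]
  have hdim : n + n - I.card = (n - 1) + (n - 1) := by rw [hcard]; omega
  have cardc : ∀ (x : Fin n), ({x}ᶜ : Finset (Fin n)).card = n - 1 := fun x => by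
    rw [Finset.card_compl, Fintype.card_fin, Finset.card_singleton]
  set B : Matrix (Fin (n - 1)) (Fin (n - 1)) ℝ := minorRC A j i with hB
  -- the enumeration of the complement of I
  set g : Fin (n + n - I.card) → Fin (n + n) := fun k =>
    if h : k.val < n - 1 then
      Fin.castAdd n (({j}ᶜ : Finset (Fin n)).orderEmbOfFin (cardc j) ⟨k.val, h⟩)
    else
      Fin.natAdd n (({i}ᶜ : Finset (Fin n)).orderEmbOfFin (cardc i)
        ⟨k.val - (n - 1), by have hk := k.isLt; omega⟩) with hg
  have hfs : ∀ x, g x ∈ Iᶜ := by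
    intro x
    rw [Finset.mem_compl, hI]
    simp only [Finset.mem_insert, Finset.mem_singleton]
    push_neg
    simp only [hg]
    by_cases h : x.val < n - 1
    · simp only [dif_pos h]
      have hmem := Finset.orderEmbOfFin_mem ({j}ᶜ : Finset (Fin n)) (cardc j) ⟨x.val, h⟩
      rw [Finset.mem_compl, Finset.mem_singleton] at hmem
      constructor
      · intro hcon
        have := congrArg Fin.val hcon
        simp only [Fin.coe_castAdd, Fin.coe_natAdd] at this
        have := (({j}ᶜ : Finset (Fin n)).orderEmbOfFin (cardc j) ⟨x.val, h⟩).isLt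
        omega
      · intro hcon
        exact hmem (Fin.ext (by simpa using congrArg Fin.val hcon))
    · simp only [dif_neg h]
      have hmem := Finset.orderEmbOfFin_mem ({i}ᶜ : Finset (Fin n)) (cardc i)
        ⟨x.val - (n - 1), by have hk := x.isLt; omega⟩
      rw [Finset.mem_compl, Finset.mem_singleton] at hmem
      constructor
      · intro hcon
        exact hmem (Fin.ext (by simpa using congrArg Fin.val hcon))
      · intro hcon
        have := congrArg Fin.val hcon
        simp only [Fin.coe_castAdd, Fin.coe_natAdd] at this
        have := j.isLt
        omega
  have hmono : StrictMono g := by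
    intro k l hkl
    have hkl' : k.val < l.val := hkl
    simp only [hg]
    by_cases hk : k.val < n - 1 <;> by_cases hl : l.val < n - 1
    · simp only [dif_pos hk, dif_pos hl]
      have hv : ((({j}ᶜ : Finset (Fin n)).orderEmbOfFin (cardc j)) ⟨k.val, hk⟩).val
          < ((({j}ᶜ : Finset (Fin n)).orderEmbOfFin (cardc j)) ⟨l.val, hl⟩).val :=
        (({j}ᶜ : Finset (Fin n)).orderEmbOfFin (cardc j)).strictMono
          (show (⟨k.val, hk⟩ : Fin (n - 1)) < ⟨l.val, hl⟩ from hkl')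
      simp only [Fin.lt_def, Fin.coe_castAdd]
      exact hv
    · simp only [dif_pos hk, dif_neg hl]
      have := (({j}ᶜ : Finset (Fin n)).orderEmbOfFin (cardc j) ⟨k.val, hk⟩).isLt
      simp only [Fin.lt_def, Fin.coe_castAdd, Fin.coe_natAdd]
      omega
    · omega
    · simp only [dif_neg hk, dif_neg hl]
      have hv : ((({i}ᶜ : Finset (Fin n)).orderEmbOfFin (cardc i))
            ⟨k.val - (n-1), by have := k.isLt; omega⟩).val
          < ((({i}ᶜ : Finset (Fin n)).orderEmbOfFin (cardc i))
            ⟨l.val - (n-1), by have := l.isLt; omega⟩).val :=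
        (({i}ᶜ : Finset (Fin n)).orderEmbOfFin (cardc i)).strictMono
          (by simp only [Fin.mk_lt_mk]; omega)
      simp only [Fin.lt_def, Fin.coe_natAdd]
      omega
  have horder : ∀ (hpf : Iᶜ.card = n + n - I.card) (x : Fin (n + n - I.card)),
      Iᶜ.orderEmbOfFin hpf x = g x := fun hpf x => by
    rw [Finset.orderEmbOfFin_unique hpf hfs hmono]
  have hkey : delete ((Matrix.fromBlocks 0 A (-Aᵀ) 0).submatrix
        (finSumFinEquiv (m := n) (n := n)).symm (finSumFinEquiv (m := n) (n := n)).symm) I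
      = (MB B).submatrix (Fin.cast hdim) (Fin.cast hdim) := by
    ext k l
    simp only [delete, Matrix.submatrix_apply]
    rw [horder _ k, horder _ l]
    simp only [hg]
    have hklt := k.isLt; have hllt := l.isLt
    by_cases hk : k.val < n - 1 <;> by_cases hl : l.val < n - 1
    · simp only [dif_pos hk, dif_pos hl]
      have hck : Fin.cast hdim k = Fin.castAdd (n - 1) ⟨k.val, hk⟩ := Fin.ext rfl
      have hcl : Fin.cast hdim l = Fin.castAdd (n - 1) ⟨l.val, hl⟩ := Fin.ext rfl
      rw [hck, hcl, MB_cc, finSumFinEquiv_symm_apply_castAdd,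
        finSumFinEquiv_symm_apply_castAdd, Matrix.fromBlocks_apply₁₁]
      simp
    · simp only [dif_pos hk, dif_neg hl]
      have hck : Fin.cast hdim k = Fin.castAdd (n - 1) ⟨k.val, hk⟩ := Fin.ext rfl
      have hcl : Fin.cast hdim l = Fin.natAdd (n - 1)
          ⟨l.val - (n - 1), by omega⟩ := Fin.ext (by
        show l.val = (n - 1) + (l.val - (n - 1)); omega)
      rw [hck, hcl, MB_cn, finSumFinEquiv_symm_apply_castAdd,
        finSumFinEquiv_symm_apply_natAdd, Matrix.fromBlocks_apply₁₂]
      rfl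
    · simp only [dif_neg hk, dif_pos hl]
      have hck : Fin.cast hdim k = Fin.natAdd (n - 1)
          ⟨k.val - (n - 1), by omega⟩ := Fin.ext (by
        show k.val = (n - 1) + (k.val - (n - 1)); omega)
      have hcl : Fin.cast hdim l = Fin.castAdd (n - 1) ⟨l.val, hl⟩ := Fin.ext rfl
      rw [hck, hcl, MB_nc, finSumFinEquiv_symm_apply_castAdd,
        finSumFinEquiv_symm_apply_natAdd, Matrix.fromBlocks_apply₂₁]
      simp only [Matrix.neg_apply, Matrix.transpose_apply, neg_inj]
      rfl
    · simp only [dif_neg hk, dif_neg hl]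
      have hck : Fin.cast hdim k = Fin.natAdd (n - 1)
          ⟨k.val - (n - 1), by omega⟩ := Fin.ext (by
        show k.val = (n - 1) + (k.val - (n - 1)); omega)
      have hcl : Fin.cast hdim l = Fin.natAdd (n - 1)
          ⟨l.val - (n - 1), by omega⟩ := Fin.ext (by
        show l.val = (n - 1) + (l.val - (n - 1)); omega)
      rw [hck, hcl, MB_nn, finSumFinEquiv_symm_apply_natAdd,
        finSumFinEquiv_symm_apply_natAdd, Matrix.fromBlocks_apply₂₂]
      simp
  rw [hkey, pf_cast hdim, pf_MB]
  have hsgn : ((Equiv.Perm.sign (sh (n - 1)) : ℤ) : ℝ)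
      = (-1 : ℝ) ^ ((n - 1) * (n - 2) / 2) := by
    rw [sign_sh]
    have he : (n - 1) - 1 = n - 2 := by omega
    rw [he]
    push_cast [Units.val_pow_eq_pow_val]
    norm_num
  rw [hsgn]
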